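/- arXiv:math/9910073 — 4 statements merged into one kernel-verified Lean document; each statement's English description precedes it below -/
import Mathlib

section
/- Let X and Y be Banach spaces and suppose there is a constant K ≥ 1 such that every bounded operator T from any finite-dimensional subspace E of X into Y admits an extension T̃ : X → Y with ‖T̃‖ ≤ K‖T‖. If Y is a dual Banach space (Y = Z* for some Banach space Z), then every bounded operator from an arbitrary closed subspace of X into Y extends to a bounded operator from X into Y. -/
/-!
For every finite set `s ⊆ E`, extend `T` restricted to `span s` to an operator `Tₛ` on `X` with
`‖Tₛ‖ ≤ K‖T‖`. By Banach–Alaoglu, for each `x` the bounded family `s ↦ Tₛ x` converges weak* along an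
ultrafilter finer than `atTop` on finite sets; the limits are linear in `x` and bounded by `K‖T‖‖x‖`,
so they form an operator `X → Z*`. It agrees with `T` on `E`, since `Tₛ x = T x` as soon as `x ∈ s`.
-/

open Filter Topology

theorem exists_tendsto_weakDual_of_norm_le {𝕜 X Z ι : Type*} [NontriviallyNormedField 𝕜]
    [ProperSpace 𝕜] [SeminormedAddCommGroup X] [NormedSpace 𝕜 X]
    [SeminormedAddCommGroup Z] [NormedSpace 𝕜 Z] (U : Ultrafilter ι)
    (T : ι → X →L[𝕜] StrongDual 𝕜 Z) (C : ℝ) (hT : ∀ i, ‖T i‖ ≤ C) :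
    ∃ S : X →L[𝕜] StrongDual 𝕜 Z, ∀ x,
      Tendsto (fun i ↦ StrongDual.toWeakDual (T i x)) U (𝓝 (StrongDual.toWeakDual (S x))) := by
  have hlim (x : X) : ∃ y ∈ WeakDual.toStrongDual ⁻¹' Metric.closedBall 0 (C * ‖x‖),
      Tendsto (fun i ↦ StrongDual.toWeakDual (T i x)) U (𝓝 y) :=
    (WeakDual.isCompact_closedBall 0 (C * ‖x‖)).ultrafilter_le_nhds
      (U.map fun i ↦ StrongDual.toWeakDual (T i x)) <| le_principal_iff.2 <| mem_map.2 <|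
        univ_mem' fun i ↦ mem_closedBall_zero_iff.2 <| (T i).le_of_opNorm_le (hT i) x
  choose φ hφ_mem hφ using hlim
  let S : X →ₗ[𝕜] StrongDual 𝕜 Z :=
    { toFun := fun x ↦ WeakDual.toStrongDual (φ x)
      map_add' := fun x x' ↦ congrArg _ <| tendsto_nhds_unique (hφ (x + x')) <|
        ((hφ x).add (hφ x')).congr fun i ↦ by simp
      map_smul' := fun c x ↦ congrArg _ <| tendsto_nhds_unique (hφ (c • x)) <|
        ((hφ x).const_smul c).congr fun i ↦ by simp }
  exact ⟨S.mkContinuous C fun x ↦ mem_closedBall_zero_iff.1 (hφ_mem x), hφ⟩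

theorem exists_extension_eq_on_finset {𝕜 X Y : Type*} [NontriviallyNormedField 𝕜]
    [SeminormedAddCommGroup X] [NormedSpace 𝕜 X] [SeminormedAddCommGroup Y] [NormedSpace 𝕜 Y]
    {K : ℝ} (hK : 0 ≤ K)
    (hext : ∀ F : Submodule 𝕜 X, FiniteDimensional 𝕜 F → ∀ T : F →L[𝕜] Y,
      ∃ T' : X →L[𝕜] Y, (∀ x : F, T' x = T x) ∧ ‖T'‖ ≤ K * ‖T‖)
    {E : Submodule 𝕜 X} (T : E →L[𝕜] Y) (s : Finset E) :
    ∃ T' : X →L[𝕜] Y, (∀ x ∈ s, T' x = T x) ∧ ‖T'‖ ≤ K * ‖T‖ := by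
  let F := Submodule.span 𝕜 (E.subtype '' s)
  have hFE : F ≤ E := Submodule.span_le.2 <| by rintro _ ⟨x, -, rfl⟩; exact x.2
  have hF : FiniteDimensional 𝕜 F := FiniteDimensional.span_of_finite 𝕜 (s.finite_toSet.image _)
  let R : F →L[𝕜] E := F.subtypeL.codRestrict E fun x ↦ hFE x.2
  obtain ⟨T', hT'_eq, hT'_norm⟩ := hext F hF (T.comp R)
  have hTR : ‖T.comp R‖ ≤ ‖T‖ :=
    (T.comp R).opNorm_le_bound (norm_nonneg T) fun x ↦ T.le_opNorm (R x)
  refine ⟨T', fun x hx ↦ hT'_eq ⟨x, Submodule.subset_span ⟨x, hx, rfl⟩⟩, ?_⟩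
  exact hT'_norm.trans (mul_le_mul_of_nonneg_left hTR hK)

theorem maurey_localization_dual_general
    {X Y Z : Type*}
    [NormedAddCommGroup X] [NormedSpace ℝ X]
    [NormedAddCommGroup Y] [NormedSpace ℝ Y]
    [NormedAddCommGroup Z] [NormedSpace ℝ Z]
    (e : Y ≃ₗᵢ[ℝ] StrongDual ℝ Z)
    (K : ℝ) (hK : 1 ≤ K)
    (hext : ∀ E : Submodule ℝ X, FiniteDimensional ℝ E → ∀ T : E →L[ℝ] Y,
      ∃ T' : X →L[ℝ] Y, (∀ x : E, T' x = T x) ∧ ‖T'‖ ≤ K * ‖T‖) :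
    ∀ E : Submodule ℝ X, IsClosed (E : Set X) → ∀ T : E →L[ℝ] Y,
      ∃ T' : X →L[ℝ] Y, ∀ x : E, T' x = T x := by
  intro E _ T
  choose Ts hTs_eq hTs_norm using exists_extension_eq_on_finset (by linarith) hext T
  let U : Ultrafilter (Finset E) := .of atTop
  let eL := e.toLinearIsometry.toContinuousLinearMap
  obtain ⟨S, hS⟩ := exists_tendsto_weakDual_of_norm_le U (fun s ↦ eL.comp (Ts s)) (K * ‖T‖)
    fun s ↦ (e.toLinearIsometry.norm_toContinuousLinearMap_comp).trans_le (hTs_norm s)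
  refine ⟨e.symm.toLinearIsometry.toContinuousLinearMap.comp S, fun x ↦ ?_⟩
  have h_eventually : ∀ᶠ s in (U : Filter (Finset E)), Ts s x = T x :=
    Ultrafilter.of_le _ <| (eventually_ge_atTop {x}).mono fun s hs ↦
      hTs_eq s x (Finset.singleton_subset_iff.1 hs)
  have hSx : StrongDual.toWeakDual (S x) = StrongDual.toWeakDual (e (T x)) :=
    tendsto_nhds_unique (hS x) <| tendsto_const_nhds.congr' <|
      h_eventually.mono fun s hs ↦ by simp [eL, hs]
  simp [StrongDual.toWeakDual.injective hSx]

/-- If every operator from a finite-dimensional subspace of `X` into `Y`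
extends with uniform constant `K`, and `Y` is (isometric to) a dual space, then every
bounded operator from an arbitrary closed subspace of `X` into `Y` extends to `X`. -/
theorem maurey_localization_dual
    {X Y Z : Type*}
    [NormedAddCommGroup X] [NormedSpace ℝ X] [CompleteSpace X]
    [NormedAddCommGroup Y] [NormedSpace ℝ Y] [CompleteSpace Y]
    [NormedAddCommGroup Z] [NormedSpace ℝ Z] [CompleteSpace Z]
    (e : Y ≃ₗᵢ[ℝ] StrongDual ℝ Z)
    (K : ℝ) (hK : 1 ≤ K)
    (hext : ∀ E : Submodule ℝ X, FiniteDimensional ℝ E → ∀ T : E →L[ℝ] Y,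
      ∃ T' : X →L[ℝ] Y, (∀ x : E, T' x = T x) ∧ ‖T'‖ ≤ K * ‖T‖) :
    ∀ E : Submodule ℝ X, IsClosed (E : Set X) → ∀ T : E →L[ℝ] Y,
      ∃ T' : X →L[ℝ] Y, ∀ x : E, T' x = T x :=
  maurey_localization_dual_general e K hK hext
end

section
/- Let X and Y be Banach spaces, E a closed subspace of X, and K a constant such that every finite-rank operator T : E → Y (i.e., T ∈ E* ⊗ Y) admits an extension T̃ : X → Y with ‖T̃‖ ≤ K‖T‖. If E or Y has the λ-bounded approximation property, then every bounded operator T : E → Y admits an extension T̃ : X → Y** with ‖T̃‖ ≤ Kλ‖T‖. -/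
/-!
Approximate `T` pointwise on `E` by finite-rank operators `S` of norm `≤ λ‖T‖`: compose `T` with
the approximating operators of `E`, or the approximating operators of `Y` with `T`. Each `S`
extends to `X` with norm `≤ Kλ‖T‖`. The extensions form a bounded net in `L(X, Y)`, so by
Tychonoff, along an ultrafilter `f (S x)` converges for every `x ∈ X` and `f ∈ Y*`; the limit is bilinear and bounded,
i.e. an operator `X → Y**` of norm `≤ Kλ‖T‖`, and on `E` it is `T`.
-/

open NormedSpace Filter Topology

/-- The topological dual of a normed space, as `NormedSpace.Dual` was defined in the older Mathlib. -/
abbrev NormedSpace.Dual (𝕜 : Type*) [NontriviallyNormedField 𝕜] (E : Type*)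
    [SeminormedAddCommGroup E] [NormedSpace 𝕜 E] : Type _ :=
  E →L[𝕜] 𝕜

/-- `Z` has the `lam`-bounded approximation property: the identity is approximated
uniformly on finite sets by finite-rank operators of norm at most `lam`. -/
def HasBAP (lam : ℝ) (Z : Type*) [NormedAddCommGroup Z] [NormedSpace ℝ Z] : Prop :=
  ∀ (s : Finset Z) (ε : ℝ), 0 < ε →
    ∃ T : Z →L[ℝ] Z, FiniteDimensional ℝ (LinearMap.range (T : Z →ₗ[ℝ] Z)) ∧
      ‖T‖ ≤ lam ∧ ∀ x ∈ s, ‖T x - x‖ < ε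

theorem ContinuousLinearMap.exists_tendsto_ultrafilter_of_norm_le
    {ι 𝕜 V F : Type*} [NontriviallyNormedField 𝕜] [SeminormedAddCommGroup V] [NormedSpace 𝕜 V]
    [NormedAddCommGroup F] [NormedSpace 𝕜 F] [ProperSpace F]
    (U : Ultrafilter ι) (g : ι → V →L[𝕜] F) {C : ℝ} (hg : ∀ i, ‖g i‖ ≤ C) :
    ∃ g' : V →L[𝕜] F, ‖g'‖ ≤ C ∧ ∀ v, Tendsto (fun i => g i v) U (𝓝 (g' v)) := by
  have hbound : ∀ i v, g i v ∈ Metric.closedBall 0 (C * ‖v‖) := fun i v => by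
    simpa using (g i).le_of_opNorm_le (hg i) v
  obtain ⟨f, hf, hlim⟩ := (isCompact_univ_pi fun v => isCompact_closedBall (0 : F) (C * ‖v‖)
    ).ultrafilter_le_nhds' (U.map fun i v => g i v)
      (Ultrafilter.mem_map.2 <| univ_mem' fun i => Set.mem_univ_pi.2 (hbound i))
  have hlim : Tendsto (fun i v => g i v) U (𝓝 f) := hlim
  obtain ⟨i₀, -⟩ := U.nonempty_of_mem univ_mem
  refine ⟨(linearMapOfTendsto f (fun i => (g i : V →ₗ[𝕜] F)) hlim).mkContinuous C
    fun v => by simpa using hf v trivial, ?_, tendsto_pi_nhds.1 hlim⟩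
  exact LinearMap.mkContinuous_norm_le _ ((norm_nonneg _).trans (hg i₀)) _

section

variable {X Y : Type*} [NormedAddCommGroup X] [NormedSpace ℝ X]
  [NormedAddCommGroup Y] [NormedSpace ℝ Y]

theorem ContinuousLinearMap.exists_bidual_tendsto_ultrafilter_of_norm_le {ι : Type*}
    (U : Ultrafilter ι) (S : ι → X →L[ℝ] Y) {M : ℝ} (hS : ∀ i, ‖S i‖ ≤ M) :
    ∃ T : X →L[ℝ] Dual ℝ (Dual ℝ Y), ‖T‖ ≤ M ∧
      ∀ x f, Tendsto (fun i => f (S i x)) U (𝓝 (T x f)) := by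
  have hSx : ∀ x i, ‖inclusionInDoubleDual ℝ Y (S i x)‖ ≤ M * ‖x‖ := fun x i =>
    (double_dual_bound ℝ Y _).trans ((S i).le_of_opNorm_le (hS i) x)
  choose T hT hlim using fun x =>
    exists_tendsto_ultrafilter_of_norm_le U (fun i => inclusionInDoubleDual ℝ Y (S i x)) (hSx x)
  have hlim : ∀ x f, Tendsto (fun i => f (S i x)) U (𝓝 (T x f)) := hlim
  have map_add : ∀ x y, T (x + y) = T x + T y := fun x y => by
    ext f
    exact tendsto_nhds_unique (hlim (x + y) f) (by simpa using (hlim x f).add (hlim y f))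
  have map_smul : ∀ (c : ℝ) x, T (c • x) = c • T x := fun c x => by
    ext f
    exact tendsto_nhds_unique (hlim (c • x) f) (by simpa using (hlim x f).const_mul c)
  obtain ⟨i₀, -⟩ := U.nonempty_of_mem univ_mem
  exact ⟨LinearMap.mkContinuous ⟨⟨T, map_add⟩, map_smul⟩ M hT,
    LinearMap.mkContinuous_norm_le _ ((norm_nonneg _).trans (hS i₀)) _, hlim⟩

theorem Submodule.exists_bidual_extension_of_forall_approx (E : Submodule ℝ X)
    (T : E →L[ℝ] Y) {M : ℝ}
    (h : ∀ (s : Finset E) (ε : ℝ), 0 < ε →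
      ∃ S : X →L[ℝ] Y, ‖S‖ ≤ M ∧ ∀ x ∈ s, ‖S x - T x‖ < ε) :
    ∃ T' : X →L[ℝ] Dual ℝ (Dual ℝ Y),
      (∀ x : E, T' x = inclusionInDoubleDual ℝ Y (T x)) ∧ ‖T'‖ ≤ M := by
  classical
  choose S hSnorm hS using fun i : Finset E × ℕ => h i.1 (1 / (i.2 + 1)) Nat.one_div_pos_of_nat
  have hST : ∀ x : E, Tendsto (fun i => S i x) atTop (𝓝 (T x)) := fun x => by
    refine tendsto_iff_norm_sub_tendsto_zero.2
      (squeeze_zero' (Eventually.of_forall fun _ => norm_nonneg _) ?_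
        (tendsto_one_div_add_atTop_nhds_zero_nat.comp
          (monotone_snd.tendsto_atTop_atTop fun n => ⟨(∅, n), le_rfl⟩)))
    filter_upwards [eventually_ge_atTop (({x}, 0) : Finset E × ℕ)] with i hi
    exact (hS i x (hi.1 (Finset.mem_singleton_self x))).le
  obtain ⟨T', hT'norm, hlim⟩ :=
    ContinuousLinearMap.exists_bidual_tendsto_ultrafilter_of_norm_le (.of atTop) S hSnorm
  refine ⟨T', fun x => ?_, hT'norm⟩
  ext f
  exact tendsto_nhds_unique (hlim x f)
    (((f.continuous.tendsto _).comp (hST x)).mono_left (Ultrafilter.of_le _))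

theorem Submodule.one_le_of_extension_norm_le {E : Submodule ℝ X} {S : E →L[ℝ] Y} (hS : S ≠ 0)
    {S' : X →L[ℝ] Y} (hext : ∀ x : E, S' x = S x) {K : ℝ} (hK : ‖S'‖ ≤ K * ‖S‖) : 1 ≤ K := by
  have hle : ‖S‖ ≤ ‖S'‖ :=
    S.opNorm_le_bound (norm_nonneg _) fun x => hext x ▸ S'.le_opNorm x
  have hpos : 0 < ‖S‖ := (norm_pos_iff (a := S)).2 hS
  exact (le_mul_iff_one_le_left hpos).1 (hle.trans hK)

end

section

variable {lam : ℝ} {Z Y : Type*} [NormedAddCommGroup Z] [NormedSpace ℝ Z]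
  [NormedAddCommGroup Y] [NormedSpace ℝ Y]

theorem HasBAP.exists_finiteRank_approx_of_domain (h : HasBAP lam Z) (T : Z →L[ℝ] Y)
    (s : Finset Z) {ε : ℝ} (hε : 0 < ε) :
    ∃ S : Z →L[ℝ] Y, FiniteDimensional ℝ (LinearMap.range (S : Z →ₗ[ℝ] Y)) ∧
      ‖S‖ ≤ lam * ‖T‖ ∧ ∀ x ∈ s, ‖S x - T x‖ < ε := by
  obtain ⟨A, hAfin, hAnorm, hA⟩ := h s (ε / (‖T‖ + 1)) (by positivity)
  refine ⟨T ∘L A, ?_, ?_, fun x hx => ?_⟩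
  · rw [ContinuousLinearMap.toLinearMap_comp, LinearMap.range_comp]
    exact Module.Finite.map _ _
  · calc ‖T ∘L A‖ ≤ ‖T‖ * ‖A‖ := T.opNorm_comp_le A
      _ ≤ lam * ‖T‖ := by rw [mul_comm]; gcongr
  · calc ‖T (A x) - T x‖ = ‖T (A x - x)‖ := by rw [map_sub]
      _ ≤ ‖T‖ * ‖A x - x‖ := T.le_opNorm _
      _ ≤ ‖T‖ * (ε / (‖T‖ + 1)) := by gcongr; exact (hA x hx).le
      _ < ε := by rw [mul_div_assoc', div_lt_iff₀ (by positivity)]; linarith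

theorem HasBAP.exists_finiteRank_approx_of_codomain (h : HasBAP lam Y) (T : Z →L[ℝ] Y)
    (s : Finset Z) {ε : ℝ} (hε : 0 < ε) :
    ∃ S : Z →L[ℝ] Y, FiniteDimensional ℝ (LinearMap.range (S : Z →ₗ[ℝ] Y)) ∧
      ‖S‖ ≤ lam * ‖T‖ ∧ ∀ x ∈ s, ‖S x - T x‖ < ε := by
  classical
  obtain ⟨B, hBfin, hBnorm, hB⟩ := h (s.image T) ε hε
  refine ⟨B ∘L T, ?_, ?_, fun x hx => hB (T x) (Finset.mem_image_of_mem T hx)⟩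
  · rw [ContinuousLinearMap.toLinearMap_comp, LinearMap.range_comp]
    exact Submodule.finiteDimensional_of_le LinearMap.map_le_range
  · calc ‖B ∘L T‖ ≤ ‖B‖ * ‖T‖ := B.opNorm_comp_le T
      _ ≤ lam * ‖T‖ := by gcongr

end

theorem extension_of_finite_rank_extension_general
    {X Y : Type*}
    [NormedAddCommGroup X] [NormedSpace ℝ X]
    [NormedAddCommGroup Y] [NormedSpace ℝ Y]
    (E : Submodule ℝ X)
    (K lam : ℝ)
    (hfin : ∀ T : E →L[ℝ] Y, FiniteDimensional ℝ (LinearMap.range (T : E →ₗ[ℝ] Y)) →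
      ∃ T' : X →L[ℝ] Y, (∀ x : E, T' x = T x) ∧ ‖T'‖ ≤ K * ‖T‖)
    (hbap : HasBAP lam E ∨ HasBAP lam Y) :
    ∀ T : E →L[ℝ] Y,
      ∃ T' : X →L[ℝ] NormedSpace.Dual ℝ (NormedSpace.Dual ℝ Y),
        (∀ x : E, T' x = NormedSpace.inclusionInDoubleDual ℝ Y (T x)) ∧
        ‖T'‖ ≤ K * lam * ‖T‖ := by
  intro T
  -- `K` may be negative only if no nonzero finite-rank operator `E → Y` exists, forcing `T = 0`.
  rcases eq_or_ne T 0 with rfl | hT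
  · exact ⟨0, fun x => by simp, by simp [ContinuousLinearMap.opNorm_zero]⟩
  have happrox : ∀ (s : Finset E) (ε : ℝ), 0 < ε → ∃ S : E →L[ℝ] Y,
      FiniteDimensional ℝ (LinearMap.range (S : E →ₗ[ℝ] Y)) ∧
        ‖S‖ ≤ lam * ‖T‖ ∧ ∀ x ∈ s, ‖S x - T x‖ < ε := fun s ε hε =>
    hbap.elim (·.exists_finiteRank_approx_of_domain T s hε)
      (·.exists_finiteRank_approx_of_codomain T s hε)
  have hK : 0 ≤ K := by
    obtain ⟨x₀, hx₀⟩ := DFunLike.ne_iff.1 hT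
    obtain ⟨S, hSfin, -, hS⟩ := happrox {x₀} ‖T x₀‖ (norm_pos_iff.2 hx₀)
    have hS0 : S ≠ 0 := by
      rintro rfl
      simpa using hS x₀ (Finset.mem_singleton_self x₀)
    obtain ⟨S', hext, hS'⟩ := hfin S hSfin
    exact zero_le_one.trans (Submodule.one_le_of_extension_norm_le hS0 hext hS')
  refine E.exists_bidual_extension_of_forall_approx T fun s ε hε => ?_
  obtain ⟨S, hSfin, hSnorm, hS⟩ := happrox s ε hε
  obtain ⟨S', hext, hS'norm⟩ := hfin S hSfin
  refine ⟨S', ?_, fun x hx => hext x ▸ hS x hx⟩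
  calc ‖S'‖ ≤ K * ‖S‖ := hS'norm
    _ ≤ K * lam * ‖T‖ := by rw [mul_assoc]; gcongr

/-- if every finite-rank operator from `E` to `Y` extends to `X` with
constant `K`, and `E` or `Y` has the `lam`-bounded approximation property, then every
bounded operator `T : E → Y` extends to an operator `X → Y**` of norm `≤ K·lam·‖T‖`. -/
theorem extension_of_finite_rank_extension
    {X Y : Type*}
    [NormedAddCommGroup X] [NormedSpace ℝ X] [CompleteSpace X]
    [NormedAddCommGroup Y] [NormedSpace ℝ Y] [CompleteSpace Y]
    (E : Submodule ℝ X) (hE : IsClosed (E : Set X))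
    (K lam : ℝ)
    (hfin : ∀ T : E →L[ℝ] Y, FiniteDimensional ℝ (LinearMap.range (T : E →ₗ[ℝ] Y)) →
      ∃ T' : X →L[ℝ] Y, (∀ x : E, T' x = T x) ∧ ‖T'‖ ≤ K * ‖T‖)
    (hbap : HasBAP lam E ∨ HasBAP lam Y) :
    ∀ T : E →L[ℝ] Y,
      ∃ T' : X →L[ℝ] NormedSpace.Dual ℝ (NormedSpace.Dual ℝ Y),
        (∀ x : E, T' x = NormedSpace.inclusionInDoubleDual ℝ Y (T x)) ∧
        ‖T'‖ ≤ K * lam * ‖T‖ :=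
  extension_of_finite_rank_extension_general E K lam hfin hbap
end

section
/- Let X and Y be Banach spaces such that for every closed subspace E ⊆ X every bounded operator T : E → Y admits a bounded extension T̃ : X → Y. Then every quotient Z of X has the same property: for every closed subspace F ⊆ Z, every bounded operator S : F → Y extends to a bounded operator from Z to Y. -/
/-!
Given `S : F → Y`, pull `F` back to the closed subspace `E = q⁻¹(F)` of `X` and extend
`S ∘ q|_E` to `T : X → Y`. Since `ker q ⊆ E` and `S ∘ q` vanishes there, `T` vanishes on `ker q`,
so it factors through `q`; the factor is bounded because, by the open mapping theorem, `q` is a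
quotient map.
-/

namespace ContinuousLinearMap

variable {𝕜 X Y Z : Type*} [NontriviallyNormedField 𝕜]
  [NormedAddCommGroup X] [NormedSpace 𝕜 X] [CompleteSpace X]
  [NormedAddCommGroup Z] [NormedSpace 𝕜 Z] [CompleteSpace Z]
  [AddCommGroup Y] [Module 𝕜 Y] [TopologicalSpace Y]

theorem exists_comp_eq_of_ker_le (q : X →L[𝕜] Z) (hq : Function.Surjective q) (T : X →L[𝕜] Y)
    (h : q.ker ≤ T.ker) : ∃ S : Z →L[𝕜] Y, S.comp q = T := by
  let S : Z →ₗ[𝕜] Y :=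
    (q.ker.liftQ T.toLinearMap h).comp (q.toLinearMap.quotKerEquivOfSurjective hq).symm.toLinearMap
  have hSq : ∀ x, S (q x) = T x := fun x => by
    have : (q.toLinearMap.quotKerEquivOfSurjective hq).symm (q x) = Submodule.Quotient.mk x := by
      rw [LinearEquiv.symm_apply_eq, LinearMap.quotKerEquivOfSurjective_apply_mk]; rfl
    simp only [S, LinearMap.comp_apply, LinearEquiv.coe_coe, this, Submodule.liftQ_apply]; rfl
  have hS : Continuous S := by
    rw [(q.isQuotientMap hq).continuous_iff]
    convert T.continuous
    exact funext hSq
  exact ⟨⟨S, hS⟩, ext hSq⟩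

end ContinuousLinearMap

theorem extension_property_of_quotient_general
    {X Y Z : Type*}
    [NormedAddCommGroup X] [NormedSpace ℝ X] [CompleteSpace X]
    [NormedAddCommGroup Y] [NormedSpace ℝ Y]
    [NormedAddCommGroup Z] [NormedSpace ℝ Z] [CompleteSpace Z]
    (q : X →L[ℝ] Z) (hq : Function.Surjective q)
    (hX : ∀ E : Submodule ℝ X, IsClosed (E : Set X) → ∀ T : E →L[ℝ] Y,
      ∃ T' : X →L[ℝ] Y, ∀ x : E, T' x = T x) :
    ∀ F : Submodule ℝ Z, IsClosed (F : Set Z) → ∀ S : F →L[ℝ] Y,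
      ∃ S' : Z →L[ℝ] Y, ∀ z : F, S' z = S z := by
  intro F hF S
  let E : Submodule ℝ X := F.comap q.toLinearMap
  let qE : E →L[ℝ] F := (q.comp E.subtypeL).codRestrict F fun x => x.2
  obtain ⟨T, hT⟩ := hX E (hF.preimage q.continuous) (S.comp qE)
  have hker : q.ker ≤ T.ker := fun x hx => by
    have hxE : x ∈ E := show q x ∈ F from (LinearMap.mem_ker.mp hx).symm ▸ F.zero_mem
    have hqE : qE ⟨x, hxE⟩ = 0 := Subtype.ext hx
    simpa [hqE] using hT ⟨x, hxE⟩
  obtain ⟨S', hS'⟩ := ContinuousLinearMap.exists_comp_eq_of_ker_le q hq T hker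
  refine ⟨S', fun z => ?_⟩
  obtain ⟨x, hx⟩ := hq z
  have hxE : x ∈ E := show q x ∈ F from hx ▸ z.2
  calc S' z = T x := by rw [← hx, ← ContinuousLinearMap.comp_apply, hS']
    _ = S (qE ⟨x, hxE⟩) := hT ⟨x, hxE⟩
    _ = S z := congrArg S (Subtype.ext hx)

/-- if every bounded operator from any closed subspace of `X` into `Y`
extends to `X`, then every quotient `Z` of `X` has the same extension property. -/
theorem extension_property_of_quotient
    {X Y Z : Type*}
    [NormedAddCommGroup X] [NormedSpace ℝ X] [CompleteSpace X]
    [NormedAddCommGroup Y] [NormedSpace ℝ Y] [CompleteSpace Y]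
    [NormedAddCommGroup Z] [NormedSpace ℝ Z] [CompleteSpace Z]
    (q : X →L[ℝ] Z) (hq : Function.Surjective q)
    (hX : ∀ E : Submodule ℝ X, IsClosed (E : Set X) → ∀ T : E →L[ℝ] Y,
      ∃ T' : X →L[ℝ] Y, ∀ x : E, T' x = T x) :
    ∀ F : Submodule ℝ Z, IsClosed (F : Set Z) → ∀ S : F →L[ℝ] Y,
      ∃ S' : Z →L[ℝ] Y, ∀ z : F, S' z = S z :=
  extension_property_of_quotient_general q hq hX
end

section
/- Let X and Y have normalized unconditional bases (xₙ) and (yₙ) respectively, with (yₙ) dominated by (xₙ) with constant K₁, and suppose (yₙ) satisfies an upper q-estimate with constant K₂ for some 1 ≤ q < ∞. For 0 < δ < 1 let X(δ,q) and Y(δ,q) be the closed linear spans of (xⱼ + δeⱼ) and (yⱼ + δeⱼ) in (X ⊕ ℓ_q)_∞ and (Y ⊕ ℓ_q)_∞, where (eⱼ) is the unit vector basis of ℓ_q. If the formal identity I_δ : X(δ,q) → Y(δ,q) extends to a bounded operator Ĩ_δ : (X ⊕ ℓ_q)_∞ → Y(δ,q) with ‖Ĩ_δ‖ < δ⁻¹,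 then for 2 ≤ q < ∞ and all real scalars (tₙ): δ²(1 − ‖Ĩ_δ‖δ)(Σ|tₙ|^q)^{1/q} ≤ 2·K₂·ubc(xₙ)·‖Σ tₙxₙ‖, i.e., (xₙ) satisfies a lower q-estimate. -/
/-!
Fix `j`. Since `Ĩ_δ (xⱼ, δeⱼ) = (yⱼ, δeⱼ)`, the vector `w = Ĩ_δ (xⱼ, 0)` has norm at least
`1 - ‖Ĩ_δ‖δ`; as `w ∈ Y(δ,q)`, the upper `q`-estimate of `(yₙ)` gives `δ‖w₁‖ ≤ K₂‖w₂‖`, so the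
`ℓ_q`-component `S xⱼ := w₂` has norm at least `δ(1 - ‖Ĩ_δ‖δ)/K₂`.
For `q ≥ 2`, `ℓ_q` satisfies `2(‖a‖^q + ‖b‖^q) ≤ ‖a + b‖^q + ‖a - b‖^q` (pointwise this is
Clarkson's inequality on `ℝ`), and iterating it bounds `∑ ‖tⱼ S xⱼ‖^q` by the largest
`‖∑ ±tⱼ S xⱼ‖^q`, which unconditionality of `(xₙ)` bounds by `(‖Ĩ_δ‖ ubc(xₙ) ‖∑ tⱼxⱼ‖)^q`.
-/

open ENNReal

local notation "ℓ_" q:max => lp (fun _ : ℕ => ℝ) (ENNReal.ofReal q)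

theorem two_mul_norm_rpow_add_norm_rpow_le {E : Type*} [NormedAddCommGroup E]
    [InnerProductSpace ℝ E] {q : ℝ} (hq : 2 ≤ q) (a b : E) :
    2 * (‖a‖ ^ q + ‖b‖ ^ q) ≤ ‖a + b‖ ^ q + ‖a - b‖ ^ q := by
  have hr : 1 ≤ q / 2 := by linarith
  have hsq : ∀ z : E, ‖z‖ ^ q = (‖z‖ ^ 2) ^ (q / 2) := fun z => by
    rw [← Real.rpow_natCast, ← Real.rpow_mul (norm_nonneg z), Nat.cast_ofNat,
      mul_div_cancel₀ q two_ne_zero]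
  rw [hsq a, hsq b, hsq (a + b), hsq (a - b)]
  have hmid := (convexOn_rpow hr).2 (Set.mem_Ici.2 (sq_nonneg ‖a + b‖))
    (Set.mem_Ici.2 (sq_nonneg ‖a - b‖)) (by norm_num : (0 : ℝ) ≤ 1 / 2)
    (by norm_num : (0 : ℝ) ≤ 1 / 2) (by norm_num)
  have hpar : (1 / 2 : ℝ) • ‖a + b‖ ^ 2 + (1 / 2 : ℝ) • ‖a - b‖ ^ 2 = ‖a‖ ^ 2 + ‖b‖ ^ 2 := by
    simp only [smul_eq_mul]
    linarith [parallelogram_law_with_norm ℝ a b]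
  rw [hpar, smul_eq_mul, smul_eq_mul] at hmid
  linarith [Real.add_rpow_le_rpow_add (sq_nonneg ‖a‖) (sq_nonneg ‖b‖) hr]

theorem lp.two_mul_norm_rpow_add_norm_rpow_le {ι : Type*} {q : ℝ} (hq : 2 ≤ q)
    [Fact (1 ≤ ENNReal.ofReal q)] (a b : lp (fun _ : ι => ℝ) (ENNReal.ofReal q)) :
    2 * (‖a‖ ^ q + ‖b‖ ^ q) ≤ ‖a + b‖ ^ q + ‖a - b‖ ^ q := by
  have hp : 0 < (ENNReal.ofReal q).toReal := by rw [toReal_ofReal (by linarith)]; linarith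
  have hnorm := fun f : lp (fun _ : ι => ℝ) (ENNReal.ofReal q) => by
    simpa only [toReal_ofReal (by linarith : 0 ≤ q)] using lp.hasSum_norm hp f
  exact hasSum_le (fun i => _root_.two_mul_norm_rpow_add_norm_rpow_le hq (a i) (b i))
    (((hnorm a).add (hnorm b)).mul_left 2) ((hnorm (a + b)).add (hnorm (a - b)))

section SignedSums

variable {ι E : Type*} [DecidableEq ι] [SeminormedAddCommGroup E] [NormedSpace ℝ E] {q : ℝ}

/-- Induction on `s`: apply the hypothesis for `s` at `w ± v k` and average. -/
theorem norm_rpow_add_sum_norm_rpow_le_of_forall_signs (hq : 0 ≤ q)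
    (hE : ∀ a b : E, 2 * (‖a‖ ^ q + ‖b‖ ^ q) ≤ ‖a + b‖ ^ q + ‖a - b‖ ^ q)
    (v : ι → E) (s : Finset ι) (w : E) (C : ℝ)
    (hC : ∀ ε : ι → ℝ, (∀ i, ε i = 1 ∨ ε i = -1) → ‖w + ∑ j ∈ s, ε j • v j‖ ≤ C) :
    ‖w‖ ^ q + ∑ j ∈ s, ‖v j‖ ^ q ≤ C ^ q := by
  induction s using Finset.induction_on generalizing w with
  | empty =>
    simpa using Real.rpow_le_rpow (norm_nonneg w) (by simpa using hC 1 (fun _ => Or.inl rfl)) hq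
  | @insert k s hk ih =>
    have hσ : ∀ σ : ℝ, (σ = 1 ∨ σ = -1) → ‖w + σ • v k‖ ^ q + ∑ j ∈ s, ‖v j‖ ^ q ≤ C ^ q :=
      fun σ hσ => ih _ fun ε hε => by
        have h := hC (Function.update ε k σ) fun i => by
          rcases eq_or_ne i k with rfl | hi
          · simpa using hσ
          · simpa [hi] using hε i
        rwa [Finset.sum_insert hk, Function.update_self, ← add_assoc,
          Finset.sum_congr rfl fun j hj => by
            rw [Function.update_of_ne (ne_of_mem_of_not_mem hj hk)]] at h
    have hplus := hσ 1 (Or.inl rfl)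
    have hminus := hσ (-1) (Or.inr rfl)
    rw [one_smul] at hplus
    rw [neg_one_smul, ← sub_eq_add_neg] at hminus
    rw [Finset.sum_insert hk]
    linarith [hE w (v k)]

theorem mul_rpow_sum_abs_rpow_le_of_forall_signs (hq : 0 < q)
    (hE : ∀ a b : E, 2 * (‖a‖ ^ q + ‖b‖ ^ q) ≤ ‖a + b‖ ^ q + ‖a - b‖ ^ q)
    (f : ι → E) (s : Finset ι) (t : ι → ℝ) {γ C : ℝ} (hγ : 0 ≤ γ) (hf : ∀ j ∈ s, γ ≤ ‖f j‖)
    (hC : ∀ ε : ι → ℝ, (∀ i, ε i = 1 ∨ ε i = -1) → ‖∑ j ∈ s, (ε j * t j) • f j‖ ≤ C) :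
    γ * (∑ j ∈ s, |t j| ^ q) ^ (1 / q) ≤ C := by
  have hC0 : 0 ≤ C := (norm_nonneg _).trans (hC 1 fun _ => Or.inl rfl)
  have hsum : ∑ j ∈ s, ‖t j • f j‖ ^ q ≤ C ^ q := by
    simpa [Real.zero_rpow hq.ne', mul_smul] using
      norm_rpow_add_sum_norm_rpow_le_of_forall_signs hq.le hE (fun j => t j • f j) s 0 C
        (by simpa [mul_smul] using hC)
  have hterm : ∀ j ∈ s, (γ * |t j|) ^ q ≤ ‖t j • f j‖ ^ q := fun j hj => by
    rw [norm_smul, Real.norm_eq_abs, mul_comm γ]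
    gcongr
    exact hf j hj
  have hT : 0 ≤ ∑ j ∈ s, |t j| ^ q := Finset.sum_nonneg fun j _ => by positivity
  calc γ * (∑ j ∈ s, |t j| ^ q) ^ (1 / q)
      = (∑ j ∈ s, (γ * |t j|) ^ q) ^ (1 / q) := by
        simp_rw [Real.mul_rpow hγ (abs_nonneg _), ← Finset.mul_sum]
        rw [Real.mul_rpow (by positivity) hT, ← Real.rpow_mul hγ, mul_one_div_cancel hq.ne',
          Real.rpow_one]
    _ ≤ (C ^ q) ^ (1 / q) := by gcongr; exact (Finset.sum_le_sum hterm).trans hsum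
    _ = C := by rw [← Real.rpow_mul hC0, mul_one_div_cancel hq.ne', Real.rpow_one]

end SignedSums

theorem lp.norm_sum_single_eq_rpow {ι : Type*} [DecidableEq ι] {q : ℝ}
    [Fact (1 ≤ ENNReal.ofReal q)] (s : Finset ι) (c : ι → ℝ) :
    ‖(∑ j ∈ s, lp.single (ENNReal.ofReal q) j (c j) : lp (fun _ : ι => ℝ) (ENNReal.ofReal q))‖ =
      (∑ j ∈ s, |c j| ^ q) ^ (1 / q) := by
  have hq : 0 < q := by linarith [ENNReal.one_le_ofReal.1 (Fact.out : 1 ≤ ENNReal.ofReal q)]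
  have h := lp.norm_sum_single (E := fun _ : ι => ℝ)
    (by rw [toReal_ofReal hq.le]; exact hq) c s
  simp only [toReal_ofReal hq.le, Real.norm_eq_abs] at h
  rw [← h, ← Real.rpow_mul (norm_nonneg _), mul_one_div_cancel hq.ne', Real.rpow_one]

/-- The paper's `Y(δ,q)`. -/
noncomputable def perturbedSpan {Y : Type*} [NormedAddCommGroup Y] [NormedSpace ℝ Y] (q : ℝ)
    [Fact (1 ≤ ENNReal.ofReal q)] (y : ℕ → Y) (δ : ℝ) :
    Submodule ℝ (Y × ℓ_ q) :=
  (Submodule.span ℝ (Set.range fun j : ℕ =>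
    ((y j, δ • (lp.single (ENNReal.ofReal q) j (1 : ℝ) : ℓ_ q)) : Y × ℓ_ q))).topologicalClosure

section PerturbedSpan

variable {X Y : Type*} [NormedAddCommGroup X] [NormedSpace ℝ X]
  [NormedAddCommGroup Y] [NormedSpace ℝ Y] {q : ℝ} [Fact (1 ≤ ENNReal.ofReal q)]
  {y : ℕ → Y} {δ K : ℝ}

theorem mul_norm_fst_le_of_mem_perturbedSpan (hδ : 0 ≤ δ)
    (hupper : ∀ (s : Finset ℕ) (a : ℕ → ℝ),
      ‖∑ i ∈ s, a i • y i‖ ≤ K * (∑ i ∈ s, |a i| ^ q) ^ (1 / q))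
    {w : Y × ℓ_ q} (hw : w ∈ perturbedSpan q y δ) :
    δ * ‖w.1‖ ≤ K * ‖w.2‖ := by
  have hclosed : IsClosed {w : Y × ℓ_ q | δ * ‖w.1‖ ≤ K * ‖w.2‖} :=
    isClosed_le (by fun_prop) (by fun_prop)
  rw [perturbedSpan, ← SetLike.mem_coe, Submodule.topologicalClosure_coe] at hw
  refine closure_minimal (fun w hw => ?_) hclosed hw
  obtain ⟨c, rfl⟩ := Finsupp.mem_span_range_iff_exists_finsupp.1 hw
  have hsnd : ∑ j ∈ c.support, c j • δ • (lp.single (ENNReal.ofReal q) j (1 : ℝ) : ℓ_ q) =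
      δ • ∑ j ∈ c.support, lp.single (ENNReal.ofReal q) j (c j) := by
    rw [Finset.smul_sum]
    refine Finset.sum_congr rfl fun j _ => ?_
    rw [smul_comm, ← lp.single_smul, smul_eq_mul, mul_one]
  simp only [Set.mem_ofPred_eq, Finsupp.sum, Prod.fst_sum, Prod.snd_sum, Prod.smul_fst,
    Prod.smul_snd, hsnd, norm_smul, Real.norm_eq_abs, abs_of_nonneg hδ,
    lp.norm_sum_single_eq_rpow]
  rw [mul_left_comm]
  exact mul_le_mul_of_nonneg_left (hupper c.support c) hδ

theorem le_norm_snd_apply_of_mem_perturbedSpan (hδ : 0 ≤ δ) (hδK : δ ≤ K)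
    (hupper : ∀ (s : Finset ℕ) (a : ℕ → ℝ),
      ‖∑ i ∈ s, a i • y i‖ ≤ K * (∑ i ∈ s, |a i| ^ q) ^ (1 / q))
    (T : (X × ℓ_ q) →L[ℝ] (Y × ℓ_ q))
    {x₀ : X} {j : ℕ} (hy : ‖y j‖ = 1)
    (hext : T (x₀, δ • (lp.single (ENNReal.ofReal q) j (1 : ℝ) : ℓ_ q)) =
      (y j, δ • (lp.single (ENNReal.ofReal q) j (1 : ℝ) : ℓ_ q)))
    (hrange : T (x₀, (0 : ℓ_ q)) ∈ perturbedSpan q y δ) :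
    δ * (1 - ‖T‖ * δ) ≤ K * ‖(T (x₀, (0 : ℓ_ q))).2‖ := by
  have hq : 0 < ENNReal.ofReal q := zero_lt_one.trans_le Fact.out
  set e : ℓ_ q := lp.single (ENNReal.ofReal q) j 1
  set w := T (x₀, (0 : ℓ_ q))
  have hTe : ‖T (0, δ • e)‖ ≤ ‖T‖ * δ := by
    simpa [e, norm_smul, lp.norm_single hq, abs_of_nonneg hδ, max_eq_right hδ] using
      T.le_opNorm (0, δ • e)
  have hy_le : ‖y j‖ ≤ ‖w‖ + ‖T (0, δ • e)‖ :=
    calc ‖y j‖ = ‖(T (x₀, δ • e)).1‖ := by rw [hext]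
      _ ≤ ‖T (x₀, δ • e)‖ := norm_fst_le _
      _ = ‖w + T (0, δ • e)‖ := by rw [← map_add, Prod.mk_add_mk, add_zero, zero_add]
      _ ≤ ‖w‖ + ‖T (0, δ • e)‖ := norm_add_le _ _
  have hw : δ * ‖w‖ ≤ K * ‖w.2‖ := by
    rw [Prod.norm_def, mul_max_of_nonneg _ _ hδ]
    exact max_le (mul_norm_fst_le_of_mem_perturbedSpan hδ hupper hrange)
      (mul_le_mul_of_nonneg_right hδK (norm_nonneg _))
  nlinarith

end PerturbedSpan

theorem lower_q_estimate_of_extension_general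
    {X Y : Type*}
    [NormedAddCommGroup X] [NormedSpace ℝ X]
    [NormedAddCommGroup Y] [NormedSpace ℝ Y]
    (q : ℝ) (hq2 : 2 ≤ q) [Fact (1 ≤ ENNReal.ofReal q)]
    (x : ℕ → X) (y : ℕ → Y)
    -- `(xₙ)`, `(yₙ)` are normalized bases
    (hynorm : ∀ n, ‖y n‖ = 1)
    -- unconditionality of `(xₙ)` with constant `ubcx`, and of `(yₙ)` with constant `ubcy`
    (ubcx : ℝ)
    (hubcx : ∀ (s : Finset ℕ) (a ε : ℕ → ℝ), (∀ i, ε i = 1 ∨ ε i = -1) →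
      ‖∑ i ∈ s, (ε i * a i) • x i‖ ≤ ubcx * ‖∑ i ∈ s, a i • x i‖)
    -- `(yₙ)` satisfies an upper `q`-estimate with constant `K₂`
    (K₂ : ℝ)
    (hupper : ∀ (s : Finset ℕ) (a : ℕ → ℝ),
      ‖∑ i ∈ s, a i • y i‖ ≤ K₂ * (∑ i ∈ s, |a i| ^ q) ^ (1 / q))
    (δ : ℝ) (hδ0 : 0 < δ) (hδ1 : δ < 1)
    -- `Ĩ_δ` : a bounded extension of the formal identity, with values in `Y(δ,q)`
    (Itil : (X × lp (fun _ : ℕ => ℝ) (ENNReal.ofReal q)) →L[ℝ]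
      (Y × lp (fun _ : ℕ => ℝ) (ENNReal.ofReal q)))
    (hext : ∀ j : ℕ,
      Itil (x j, δ • lp.single (ENNReal.ofReal q) j (1 : ℝ)) =
        (y j, δ • lp.single (ENNReal.ofReal q) j (1 : ℝ)))
    (hrange : ∀ v, Itil v ∈ (Submodule.span ℝ (Set.range fun j : ℕ =>
        ((y j, δ • lp.single (ENNReal.ofReal q) j (1 : ℝ)) :
          Y × lp (fun _ : ℕ => ℝ) (ENNReal.ofReal q)))).topologicalClosure)
    (hnorm : ‖Itil‖ < δ⁻¹) :
    ∀ (s : Finset ℕ) (t : ℕ → ℝ),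
      δ ^ 2 * (1 - ‖Itil‖ * δ) * (∑ i ∈ s, |t i| ^ q) ^ (1 / q) ≤
        2 * K₂ * ubcx * ‖∑ i ∈ s, t i • x i‖ := by
  intro s t
  have hK₂ : 1 ≤ K₂ := by simpa [hynorm] using hupper {0} 1
  have hIδ : ‖Itil‖ * δ < 1 := by simpa [hδ0.ne'] using mul_lt_mul_of_pos_right hnorm hδ0
  have hu : 0 ≤ ubcx * ‖∑ i ∈ s, t i • x i‖ :=
    (norm_nonneg _).trans (by simpa using hubcx s t 1 fun _ => Or.inl rfl)
  let S := ContinuousLinearMap.snd ℝ Y (ℓ_ q) ∘L Itil ∘L ContinuousLinearMap.inl ℝ X (ℓ_ q)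
  have hS : ‖S‖ ≤ ‖Itil‖ := S.opNorm_le_bound (norm_nonneg _) fun z => by
    change ‖(Itil (z, 0)).2‖ ≤ _
    simpa using (norm_snd_le (Itil (z, 0))).trans (Itil.le_opNorm (z, 0))
  have hSx : ∀ j ∈ s, δ * (1 - ‖Itil‖ * δ) / K₂ ≤ ‖S (x j)‖ := fun j _ => by
    rw [div_le_iff₀ (by linarith), mul_comm _ K₂]
    exact le_norm_snd_apply_of_mem_perturbedSpan hδ0.le (by linarith) hupper Itil (hynorm j)
      (hext j) (hrange _)
  have hsigns : ∀ ε : ℕ → ℝ, (∀ i, ε i = 1 ∨ ε i = -1) →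
      ‖∑ j ∈ s, (ε j * t j) • S (x j)‖ ≤ ‖Itil‖ * (ubcx * ‖∑ i ∈ s, t i • x i‖) := fun ε hε => by
    simp_rw [← map_smul, ← map_sum]
    exact (S.le_opNorm _).trans (mul_le_mul hS (hubcx s t ε hε) (norm_nonneg _) (norm_nonneg _))
  have hγ : 0 ≤ δ * (1 - ‖Itil‖ * δ) / K₂ := div_nonneg (by nlinarith) (by linarith)
  have hE : ∀ a b : ℓ_ q, 2 * (‖a‖ ^ q + ‖b‖ ^ q) ≤ ‖a + b‖ ^ q + ‖a - b‖ ^ q :=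
    lp.two_mul_norm_rpow_add_norm_rpow_le hq2
  have key := mul_rpow_sum_abs_rpow_le_of_forall_signs (by linarith) hE (fun j => S (x j)) s t
    hγ hSx hsigns
  calc δ ^ 2 * (1 - ‖Itil‖ * δ) * (∑ i ∈ s, |t i| ^ q) ^ (1 / q)
      = δ * K₂ * (δ * (1 - ‖Itil‖ * δ) / K₂ * (∑ i ∈ s, |t i| ^ q) ^ (1 / q)) := by
        field_simp [show K₂ ≠ 0 by linarith]
    _ ≤ δ * K₂ * (‖Itil‖ * (ubcx * ‖∑ i ∈ s, t i • x i‖)) := by gcongr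
    _ = ‖Itil‖ * δ * (K₂ * (ubcx * ‖∑ i ∈ s, t i • x i‖)) := by ring
    _ ≤ 2 * K₂ * ubcx * ‖∑ i ∈ s, t i • x i‖ := by
        have hK₂u : 0 ≤ K₂ * (ubcx * ‖∑ i ∈ s, t i • x i‖) := mul_nonneg (by linarith) hu
        nlinarith

/-- Theorem 2.3, case `2 ≤ q < ∞`: lower `q`-estimate for `(xₙ)` from a
bounded extension of the formal identity `X(δ,q) → Y(δ,q)`. -/
theorem lower_q_estimate_of_extension
    {X Y : Type*}
    [NormedAddCommGroup X] [NormedSpace ℝ X] [CompleteSpace X]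
    [NormedAddCommGroup Y] [NormedSpace ℝ Y] [CompleteSpace Y]
    (q : ℝ) (hq2 : 2 ≤ q) [Fact (1 ≤ ENNReal.ofReal q)]
    (x : ℕ → X) (y : ℕ → Y)
    -- `(xₙ)`, `(yₙ)` are normalized bases
    (hxnorm : ∀ n, ‖x n‖ = 1) (hynorm : ∀ n, ‖y n‖ = 1)
    (hxtotal : (Submodule.span ℝ (Set.range x)).topologicalClosure = ⊤)
    (hytotal : (Submodule.span ℝ (Set.range y)).topologicalClosure = ⊤)
    -- unconditionality of `(xₙ)` with constant `ubcx`, and of `(yₙ)` with constant `ubcy`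
    (ubcx : ℝ)
    (hubcx : ∀ (s : Finset ℕ) (a ε : ℕ → ℝ), (∀ i, ε i = 1 ∨ ε i = -1) →
      ‖∑ i ∈ s, (ε i * a i) • x i‖ ≤ ubcx * ‖∑ i ∈ s, a i • x i‖)
    (ubcy : ℝ)
    (hubcy : ∀ (s : Finset ℕ) (a ε : ℕ → ℝ), (∀ i, ε i = 1 ∨ ε i = -1) →
      ‖∑ i ∈ s, (ε i * a i) • y i‖ ≤ ubcy * ‖∑ i ∈ s, a i • y i‖)
    -- `(yₙ) < (xₙ)` with constant `K₁`
    (K₁ : ℝ)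
    (hdom : ∀ (s : Finset ℕ) (a : ℕ → ℝ),
      ‖∑ i ∈ s, a i • y i‖ ≤ K₁ * ‖∑ i ∈ s, a i • x i‖)
    -- `(yₙ)` satisfies an upper `q`-estimate with constant `K₂`
    (K₂ : ℝ)
    (hupper : ∀ (s : Finset ℕ) (a : ℕ → ℝ),
      ‖∑ i ∈ s, a i • y i‖ ≤ K₂ * (∑ i ∈ s, |a i| ^ q) ^ (1 / q))
    (δ : ℝ) (hδ0 : 0 < δ) (hδ1 : δ < 1)
    -- `Ĩ_δ` : a bounded extension of the formal identity, with values in `Y(δ,q)`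
    (Itil : (X × lp (fun _ : ℕ => ℝ) (ENNReal.ofReal q)) →L[ℝ]
      (Y × lp (fun _ : ℕ => ℝ) (ENNReal.ofReal q)))
    (hext : ∀ j : ℕ,
      Itil (x j, δ • lp.single (ENNReal.ofReal q) j (1 : ℝ)) =
        (y j, δ • lp.single (ENNReal.ofReal q) j (1 : ℝ)))
    (hrange : ∀ v, Itil v ∈ (Submodule.span ℝ (Set.range fun j : ℕ =>
        ((y j, δ • lp.single (ENNReal.ofReal q) j (1 : ℝ)) :
          Y × lp (fun _ : ℕ => ℝ) (ENNReal.ofReal q)))).topologicalClosure)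
    (hnorm : ‖Itil‖ < δ⁻¹) :
    ∀ (s : Finset ℕ) (t : ℕ → ℝ),
      δ ^ 2 * (1 - ‖Itil‖ * δ) * (∑ i ∈ s, |t i| ^ q) ^ (1 / q) ≤
        2 * K₂ * ubcx * ‖∑ i ∈ s, t i • x i‖ :=
  lower_q_estimate_of_extension_general q hq2 x y hynorm ubcx hubcx K₂ hupper δ hδ0 hδ1 Itil hext
    hrange hnorm
end
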